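/- The justification operator is hyperintensional: for the formulae A = P(x) ∧ Q(y) and B = Q(y) ∧ P(x), for which A ⊨ B and B ⊨ A (each is a logical consequence of the other), there exists a model M with state w such that M, w ⊨ j:(P(x)∧Q(y)) for some term j, but no term justifies Q(y)∧P(x) at w, i.e. M, w ⊭ t:(Q(y)∧P(x)) for every term t. -/
import Mathlib


/-- Terms of the logic: variables, application, λ-abstraction, proof checker `!`. -/
inductive Tm : Type
  | var : ℕ → Tm
  | app : Tm → Tm → Tm
  | lam : ℕ → Tm → Tm
  | bang : Tm → Tm
deriving DecidableEq

/-- Formulae: ⊥, identity, predicates, →, ∧, ∀, epistemic operator K_a, justifications j:A. -/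
inductive Fm : Type
  | bot : Fm
  | eq : Tm → Tm → Fm
  | pred : ℕ → List Tm → Fm
  | imp : Fm → Fm → Fm
  | conj : Fm → Fm → Fm
  | all : ℕ → Fm → Fm
  | know : ℕ → Fm → Fm
  | just : Tm → Fm → Fm
deriving DecidableEq

/-- Negation abbreviation: ¬A := A → ⊥. -/
def Fm.neg (A : Fm) : Fm := Fm.imp A Fm.bot

/-- Free variables of a term. -/
def Tm.fv : Tm → Finset ℕ
  | .var x => {x}
  | .app t s => t.fv ∪ s.fv
  | .lam x t => t.fv.erase x
  | .bang t => t.fv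

/-- Free variables of a formula (the justification term and agent index do not count). -/
def Fm.fv : Fm → Finset ℕ
  | .bot => ∅
  | .eq t s => t.fv ∪ s.fv
  | .pred _ ts => ts.foldr (fun t acc => t.fv ∪ acc) ∅
  | .imp A B => A.fv ∪ B.fv
  | .conj A B => A.fv ∪ B.fv
  | .all x A => A.fv.erase x
  | .know _ A => A.fv
  | .just _ A => A.fv

/-- Term-level substitution: replace the (whole) term `v` by `u`. -/
def substTm (t u v : Tm) : Tm := if t = v then u else t

/-- Quantifier-instantiating substitution A[u/v]: permutes into K_a and j: operators. -/
def Fm.qsubst : Fm → Tm → Tm → Fm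
  | .bot, _, _ => .bot
  | .eq t1 t2, u, v => .eq (substTm t1 u v) (substTm t2 u v)
  | .pred n ts, u, v => .pred n (ts.map (fun t => substTm t u v))
  | .imp A B, u, v => .imp (A.qsubst u v) (B.qsubst u v)
  | .conj A B, u, v => .conj (A.qsubst u v) (B.qsubst u v)
  | .all y A, u, v =>
      if v = Tm.var y then .all y A
      else if u = Tm.var y then .all y A
      else .all y (A.qsubst u v)
  | .know a A, u, v => .know a (A.qsubst u v)
  | .just j A, u, v => .just j (A.qsubst u v)

/-- Leibniz substitution of identicals A(u/v): does NOT permute into K_a or j: operators. -/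
def Fm.lsubst : Fm → Tm → Tm → Fm
  | .bot, _, _ => .bot
  | .eq t1 t2, u, v => .eq (substTm t1 u v) (substTm t2 u v)
  | .pred n ts, u, v => .pred n (ts.map (fun t => substTm t u v))
  | .imp A B, u, v => .imp (A.lsubst u v) (B.lsubst u v)
  | .conj A B, u, v => .conj (A.lsubst u v) (B.lsubst u v)
  | .all y A, u, v =>
      if v = Tm.var y then .all y A
      else if u = Tm.var y then .all y A
      else .all y (A.lsubst u v)
  | .know a A, _, _ => .know a A
  | .just j A, _, _ => .just j A

/-- Simultaneous substitution of terms for (free) variables in a term. -/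
def msubstTm (σ : ℕ → Tm) : Tm → Tm
  | .var x => σ x
  | t => t

/-- Simultaneous substitution of terms for the free variables of a formula. -/
def Fm.msubst : Fm → (ℕ → Tm) → Fm
  | .bot, _ => .bot
  | .eq t s, σ => .eq (msubstTm σ t) (msubstTm σ s)
  | .pred n ts, σ => .pred n (ts.map (msubstTm σ))
  | .imp A B, σ => .imp (A.msubst σ) (B.msubst σ)
  | .conj A B, σ => .conj (A.msubst σ) (B.msubst σ)
  | .all y A, σ => .all y (A.msubst (fun x => if x = y then Tm.var y else σ x))
  | .know a A, σ => .know a (A.msubst σ)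
  | .just j A, σ => .just j (A.msubst σ)

/-- Atomic formulae (targets of ex falso). -/
def Fm.isAtomic : Fm → Prop
  | .bot => True
  | .eq _ _ => True
  | .pred _ _ => True
  | _ => False

/-- The natural deduction calculus (sequents Γ ⇒ A, contexts as lists up to structural rules). -/
inductive Der : List Fm → Fm → Prop
  | ax (A : Fm) : Der [A] A
  | impI {Γ A B} : Der (A :: Γ) B → Der Γ (Fm.imp A B)
  | impE {Γ Δ A B} : Der Γ (Fm.imp A B) → Der Δ A → Der (Γ ++ Δ) B
  | exf {Γ A} : Fm.isAtomic A → Der Γ Fm.bot → Der Γ A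
  | dne {Γ A} : Der Γ (Fm.neg (Fm.neg A)) → Der Γ A
  | conjI {Γ Δ A B} : Der Γ A → Der Δ B → Der (Γ ++ Δ) (Fm.conj A B)
  | conjE1 {Γ A B} : Der Γ (Fm.conj A B) → Der Γ A
  | conjE2 {Γ A B} : Der Γ (Fm.conj A B) → Der Γ B
  | allI {Γ x y A} :
      Der Γ (Fm.qsubst A (Tm.var y) (Tm.var x)) →
      (∀ B ∈ Γ, y ∉ Fm.fv B) → (y = x ∨ y ∉ Fm.fv (Fm.all x A)) →
      Der Γ (Fm.all x A)
  | allE {Γ x A} (t : Tm) : Der Γ (Fm.all x A) → Der Γ (Fm.qsubst A t (Tm.var x))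
  | eqRefl (t : Tm) : Der [] (Fm.eq t t)
  | eqSym {Γ t s} : Der Γ (Fm.eq t s) → Der Γ (Fm.eq s t)
  | eqTrans {Γ Δ u t v} : Der Γ (Fm.eq u t) → Der Δ (Fm.eq t v) → Der (Γ ++ Δ) (Fm.eq u v)
  | leibniz {Γ Δ t s A x} :
      Der Γ (Fm.eq t s) → Der Δ (Fm.lsubst A t (Tm.var x)) →
      Der (Γ ++ Δ) (Fm.lsubst A s (Tm.var x))
  | nec {Γ a A} :
      (∀ B ∈ Γ, ∃ C, B = Fm.know a C) → Der Γ A → Der Γ (Fm.know a A)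
  | kdist {Γ Δ a A B} :
      Der Γ (Fm.know a (Fm.imp A B)) → Der Δ (Fm.know a A) → Der (Γ ++ Δ) (Fm.know a B)
  | kfact {Γ a A} : Der Γ (Fm.know a A) → Der Γ A
  | k5 {Γ a A} : Der Γ (Fm.neg (Fm.know a A)) → Der Γ (Fm.know a (Fm.neg (Fm.know a A)))
  | jApp {Γ Δ j k A B} :
      Der Γ (Fm.just j (Fm.imp A B)) → Der Δ (Fm.just k A) →
      Der (Γ ++ Δ) (Fm.just (Tm.app j k) B)
  | jFact {Γ j A} : Der Γ (Fm.just j A) → Der Γ A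
  | jBang {Γ j A} : Der Γ (Fm.just j A) → Der Γ (Fm.just (Tm.bang j) (Fm.just j A))
  | jLeib1 {Γ Δ j k t s A x} :
      Der Γ (Fm.just k (Fm.eq t s)) → Der Δ (Fm.just j (Fm.lsubst A t (Tm.var x))) →
      Der (Γ ++ Δ) (Fm.just j (Fm.lsubst A s (Tm.var x)))
  | jLeib2 {Γ Δ j k t s A x} :
      Der Γ (Fm.just k (Fm.eq s t)) → Der Δ (Fm.just j (Fm.lsubst A t (Tm.var x))) →
      Der (Γ ++ Δ) (Fm.just j (Fm.lsubst A s (Tm.var x)))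
  | struct {Γ Δ A} : Der Γ A → (∀ B ∈ Γ, B ∈ Δ) → Der Δ A

/-- Derivability from a (possibly infinite) set of hypotheses. -/
def Deriv (S : Set Fm) (A : Fm) : Prop :=
  ∃ Γ : List Fm, (∀ B ∈ Γ, B ∈ S) ∧ Der Γ A

def Consistent (S : Set Fm) : Prop := ¬ Deriv S Fm.bot

def MaxConsistent (S : Set Fm) : Prop :=
  Consistent S ∧ ∀ A : Fm, A ∉ S → ¬ Consistent (insert A S)

def Counterexemplar (S : Set Fm) : Prop :=
  ∀ (x : ℕ) (A : Fm), Fm.neg (Fm.all x A) ∈ S →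
    ∃ t : Tm, Fm.neg (A.qsubst t (Tm.var x)) ∈ S

/-- Maximally consistent counterexemplar set. -/
def IsMCC (S : Set Fm) : Prop := MaxConsistent S ∧ Counterexemplar S

/-- The data of a constant-domain Kripke model (terms are rigid designators). -/
structure PreModel where
  W : Type
  R : ℕ → W → W → Prop
  Rγ : W → W → Prop
  U : Type
  tmI : Tm → U
  eqI : W → U → U → Prop
  predI : W → ℕ → List U → Prop
  E : W → Tm → Set Fm

/-- An assignment: interprets terms, identity and predicates. -/
structure Assign (M : PreModel) where
  tm : Tm → M.U
  eqA : M.U → M.U → Prop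
  predA : ℕ → List M.U → Prop

/-- Combination f_{w↪v}: keep the term part, take predicates/identity from the state v. -/
def Assign.shift {M : PreModel} (f : Assign M) (v : M.W) : Assign M :=
  ⟨f.tm, M.eqI v, M.predI v⟩

/-- The interpretation at a state, as an assignment. -/
def PreModel.init (M : PreModel) (w : M.W) : Assign M :=
  ⟨M.tmI, M.eqI w, M.predI w⟩

/-- g is an x-variant of f. -/
def XVariant {M : PreModel} (f g : Assign M) (x : ℕ) : Prop :=
  (∀ t : Tm, t ≠ Tm.var x → g.tm t = f.tm t) ∧ g.eqA = f.eqA ∧ g.predA = f.predA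

/-- Truth of a formula at a state under an assignment. -/
def Truth (M : PreModel) : Fm → M.W → Assign M → Prop
  | .bot, _, _ => False
  | .eq t s, _, f => f.eqA (f.tm t) (f.tm s)
  | .pred n ts, _, f => f.predA n (ts.map f.tm)
  | .imp A B, w, f => Truth M A w f → Truth M B w f
  | .conj A B, w, f => Truth M A w f ∧ Truth M B w f
  | .all x A, w, f => ∀ g : Assign M, XVariant f g x → Truth M A w g
  | .know a A, w, f => ∀ v : M.W, M.R a w v → Truth M A v (f.shift v)
  | .just j A, w, f =>
      (∀ v : M.W, M.Rγ w v → Truth M A v (f.shift v)) ∧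
      (∃ σ : ℕ → Tm, (∀ x ∈ A.fv, f.tm (σ x) = f.tm (Tm.var x)) ∧ A.msubst σ ∈ M.E w j)

/-- The frame and interpretation conditions making a premodel a genuine model. -/
def IsModel (M : PreModel) : Prop :=
  (∀ a (w : M.W), M.R a w w) ∧
  (∀ a (w u v : M.W), M.R a w u → M.R a w v → M.R a u v) ∧
  (∀ w : M.W, M.Rγ w w) ∧
  (∀ w u v : M.W, M.Rγ w u → M.Rγ u v → M.Rγ w v) ∧
  (∀ e : M.U, ∃ t : Tm, M.tmI t = e) ∧
  (∀ w : M.W, Equivalence (M.eqI w)) ∧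
  (∀ (w : M.W) n (es es' : List M.U),
      List.Forall₂ (M.eqI w) es es' → M.predI w n es → M.predI w n es') ∧
  (∀ (w v : M.W) (t : Tm), M.Rγ w v → M.E w t ⊆ M.E v t) ∧
  (∀ (w : M.W) (j : Tm) (A : Fm), A ∈ M.E w j → Fm.just j A ∈ M.E w (Tm.bang j)) ∧
  (∀ (w : M.W) (j k : Tm) (A B : Fm),
      Fm.imp A B ∈ M.E w j → A ∈ M.E w k → B ∈ M.E w (Tm.app j k)) ∧
  (∀ (w : M.W) (j : Tm) (A : Fm) (t s : Tm) (x : ℕ),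
      A.lsubst t (Tm.var x) ∈ M.E w j →
      (∃ k : Tm, Fm.eq t s ∈ M.E w k ∨ Fm.eq s t ∈ M.E w k) →
      A.lsubst s (Tm.var x) ∈ M.E w j)

/-- Logical consequence: every state of every model verifying Γ verifies A. -/
def Entails (Γ : List Fm) (A : Fm) : Prop :=
  ∀ M : PreModel, IsModel M → ∀ w : M.W,
    (∀ B ∈ Γ, Truth M B w (M.init w)) → Truth M A w (M.init w)

/-- Canonical accessibility for agent a on sets of formulae. -/
def RCa (a : ℕ) (w v : Set Fm) : Prop := ∀ A : Fm, Fm.know a A ∈ w → A ∈ v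

/-- Canonical accessibility for justifications on sets of formulae. -/
def RCγ (w v : Set Fm) : Prop := ∀ A : Fm, (∃ j : Tm, Fm.just j A ∈ w) → A ∈ v

/-- States of the canonical model. -/
def CanW : Type := {S : Set Fm // IsMCC S}

/-- The canonical model. -/
def Canonical : PreModel where
  W := CanW
  R := fun a w v => RCa a w.1 v.1
  Rγ := fun w v => RCγ w.1 v.1
  U := Tm
  tmI := id
  eqI := fun w t s => Fm.eq t s ∈ w.1
  predI := fun w n ts => Fm.pred n ts ∈ w.1
  E := fun w j => {A : Fm | Fm.just j A ∈ w.1}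

/-- The formula A = P(x) ∧ Q(y). -/
def A0 : Fm := Fm.conj (Fm.pred 0 [Tm.var 0]) (Fm.pred 1 [Tm.var 1])

/-- Evidence relation: j₀ justifies A₀, closed under the proof checker. -/
inductive Good : Tm → Fm → Prop
  | base : Good (Tm.var 0) A0
  | step {j C} : Good j C → Good (Tm.bang j) (Fm.just j C)

lemma good_shape {j C} (h : Good j C) :
    C = A0 ∨ ∃ j' C', C = Fm.just j' C' := by
  cases h with
  | base => exact Or.inl rfl
  | step h => exact Or.inr ⟨_, _, rfl⟩

/-- One-world model: everything true, evidence given by `Good`. -/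
def M0 : PreModel where
  W := Unit
  R := fun _ _ _ => True
  Rγ := fun _ _ => True
  U := Unit
  tmI := fun _ => ()
  eqI := fun _ _ _ => True
  predI := fun _ _ _ => True
  E := fun _ j => {C | Good j C}

lemma m0_isModel : IsModel M0 := by
  refine ⟨fun _ _ => trivial, fun _ _ _ _ _ _ => trivial, fun _ => trivial,
    fun _ _ _ _ _ => trivial, fun _ => ⟨Tm.var 0, rfl⟩,
    fun _ => ⟨fun _ => trivial, fun _ => trivial, fun _ _ => trivial⟩,
    fun _ _ _ _ _ _ => trivial, fun _ _ _ _ => fun _ h => h,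
    fun _ j C h => Good.step h, ?_, ?_⟩
  · intro _ j k X Y h _
    rcases good_shape h with h' | ⟨_, _, h'⟩ <;> simp [A0] at h'
  · intro w j X t s x _ ⟨k, hk⟩
    exfalso
    rcases hk with hk | hk <;>
      rcases good_shape hk with h' | ⟨_, _, h'⟩ <;> simp [A0] at h'

/-- the justification operator is hyperintensional: with
A = P(x) ∧ Q(y) and B = Q(y) ∧ P(x), A and B are logical consequences of each
other, yet in some model j:A is true at a state where no term justifies B. -/
theorem just_hyperintensional :
    ∃ (A B : Fm) (M : PreModel) (w : M.W) (j : Tm),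
      A = Fm.conj (Fm.pred 0 [Tm.var 0]) (Fm.pred 1 [Tm.var 1]) ∧
      B = Fm.conj (Fm.pred 1 [Tm.var 1]) (Fm.pred 0 [Tm.var 0]) ∧
      Entails [A] B ∧ Entails [B] A ∧
      IsModel M ∧
      Truth M (Fm.just j A) w (M.init w) ∧
      (∀ k : Tm, ¬ Truth M (Fm.just k B) w (M.init w)) := by
  refine ⟨A0, Fm.conj (Fm.pred 1 [Tm.var 1]) (Fm.pred 0 [Tm.var 0]),
    M0, (), Tm.var 0, rfl, rfl, ?_, ?_, m0_isModel, ?_, ?_⟩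
  · intro M _ w h
    have := h A0 (by simp)
    exact ⟨this.2, this.1⟩
  · intro M _ w h
    have := h (Fm.conj (Fm.pred 1 [Tm.var 1]) (Fm.pred 0 [Tm.var 0])) (by simp)
    exact ⟨this.2, this.1⟩
  · refine ⟨fun v _ => ⟨trivial, trivial⟩, Tm.var, fun x _ => rfl, ?_⟩
    show A0.msubst Tm.var ∈ _
    have : A0.msubst Tm.var = A0 := by simp [A0, Fm.msubst, msubstTm]
    rw [this]; exact Good.base
  · rintro k ⟨-, σ, -, hmem⟩
    have hmem : Good k (Fm.conj (Fm.pred 1 [msubstTm σ (Tm.var 1)])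
        (Fm.pred 0 [msubstTm σ (Tm.var 0)])) := hmem
    rcases good_shape hmem with h' | ⟨_, _, h'⟩ <;> simp [A0] at h'
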